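/- arXiv:math/0409257 — 3 statements merged into one kernel-verified Lean document; each statement's English description precedes it below -/
import Mathlib

section
/- Let f = f₀ + f₁u + ⋯ + f_m u^m ∈ R₁ be an irreducible polynomial with m > 0, f_m > 0, f₀ ≠ 0. Then the kernel of f(σ̄) acting on ℓ^∞(ℤ,ℝ) equals the real linear span of the sequences (Re(ω^n))_{n∈ℤ} and (Im(ω^n))_{n∈ℤ}, where ω ranges over the roots of f of absolute value 1. In particular, f(σ̄) is injective on ℓ^∞(ℤ,ℝ) if and only if f has no root of absolute value 1. -/
open Filter Topology

/-- The action of `f(σ̄)` on two-sided real sequences, where `σ̄` is the shift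
`(σ̄ w) n = w (n+1)`:  `(f(σ̄) w) n = ∑ₖ fₖ w (n+k)`. -/
noncomputable def fAct (f : Polynomial ℤ) (w : ℤ → ℝ) : ℤ → ℝ :=
  fun n => ∑ k ∈ Finset.range (f.natDegree + 1), (f.coeff k : ℝ) * w (n + (k : ℤ))

/-!
`f(σ̄)` is `aeval σ̄ f` for the shift `σ̄` on sequences. Over `ℂ`, `f` is separable (being
irreducible) with nonzero roots (as `f₀ ≠ 0`), and the sequences `n ↦ ωⁿ` for its roots `ω` are
eigenvectors of `σ̄` with distinct eigenvalues. Since `f₀ ≠ 0 ≠ f_m`, a solution of `f(σ̄) W = 0`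
is determined by `deg f` consecutive values, so these `deg f` sequences span the complex kernel.
If `W = ∑ c_ω ωⁿ` is bounded, then so is `(∏_{ν ≠ ω} (σ̄ - ν)) W = c_ω ∏_{ν ≠ ω} (ω - ν) ωⁿ`,
which forces `|ω| = 1` whenever `c_ω ≠ 0`. A bounded real solution `w` is the real part of the
complex solution `w`, hence a real combination of the sequences `Re ωⁿ` and `Im ωⁿ`.
-/

open Polynomial
open scoped ENNReal

noncomputable def seqShift (R : Type*) [CommSemiring R] : Module.End R (ℤ → R) :=
  LinearMap.funLeft R R (· + 1)

def geomSeq {K : Type*} [DivisionRing K] (ω : K) : ℤ → K := fun n => ω ^ n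

def boundedSeqs (𝕜 : Type*) [NormedField 𝕜] : Submodule 𝕜 (ℤ → 𝕜) where
  carrier := {W | Memℓp W ∞}
  add_mem' ha hb := by simp only [Set.mem_ofPred_eq] at *; exact ha.add hb
  zero_mem' := by simp only [Set.mem_ofPred_eq]; exact zero_memℓp
  smul_mem' c _ hW := by simp only [Set.mem_ofPred_eq] at *; exact hW.const_smul c

section CommSemiring
variable {R : Type*} [CommSemiring R]

theorem seqShift_apply (W : ℤ → R) (n : ℤ) : seqShift R W n = W (n + 1) := rfl

theorem seqShift_pow_apply (k : ℕ) (W : ℤ → R) (n : ℤ) :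
    (seqShift R ^ k) W n = W (n + k) := by
  induction k generalizing n with
  | zero => simp
  | succ k ih =>
    rw [pow_succ', Module.End.mul_apply, seqShift_apply, ih, add_assoc]
    push_cast
    rw [add_comm 1]

theorem aeval_seqShift_apply {S : Type*} [CommSemiring S] [Algebra S R] (p : S[X])
    (W : ℤ → R) (n : ℤ) :
    aeval (seqShift R) p W n = ∑ k ∈ Finset.range (p.natDegree + 1), p.coeff k • W (n + k) := by
  simp [aeval_eq_sum_range, seqShift_pow_apply]

end CommSemiring

theorem fAct_eq_aeval (f : ℤ[X]) : fAct f = aeval (seqShift ℝ) f := by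
  ext w n
  simp [fAct, aeval_seqShift_apply, zsmul_eq_mul]

theorem aeval_seqShift_comp {R R' : Type*} [CommRing R] [CommRing R'] (p : ℤ[X]) (φ : R →+ R')
    (W : ℤ → R) : aeval (seqShift R') p (φ ∘ W) = φ ∘ aeval (seqShift R) p W := by
  ext n
  simp only [aeval_seqShift_apply, Function.comp_apply, map_sum, map_zsmul]

theorem eq_zero_of_aeval_seqShift_eq_zero_of_init {R : Type*} [CommRing R] [IsDomain R]
    {p : R[X]} (h0 : p.coeff 0 ≠ 0) {W : ℤ → R} (hW : aeval (seqShift R) p W = 0)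
    (hinit : ∀ i < p.natDegree, W i = 0) : W = 0 := by
  set d := p.natDegree
  have hrec (n : ℤ) : ∑ k ∈ Finset.range (d + 1), p.coeff k * W (n + k) = 0 := by
    simpa [aeval_seqShift_apply] using congrFun hW n
  have hd : p.coeff d ≠ 0 := leadingCoeff_ne_zero.mpr (by rintro rfl; simp at h0)
  have up (N : ℤ) (hN : ∀ j, N ≤ j → j < N + d → W j = 0) : W (N + d) = 0 := by
    have h := hrec N
    rw [Finset.sum_range_succ, Finset.sum_eq_zero fun k hk => by
      rw [hN _ (by omega) (by simp at hk; omega), mul_zero], zero_add] at h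
    exact (mul_eq_zero.mp h).resolve_left hd
  have down (N : ℤ) (hN : ∀ j, N ≤ j → j < N + d → W j = 0) : W (N - 1) = 0 := by
    have h := hrec (N - 1)
    rw [Finset.sum_range_succ', Finset.sum_eq_zero fun k hk => by
      rw [hN _ (by omega) (by simp at hk; omega), mul_zero], zero_add] at h
    simpa [h0] using h
  have window (N : ℤ) : ∀ j, N ≤ j → j < N + d → W j = 0 := by
    induction N using Int.induction_on with
    | zero =>
      intro j hj hjd
      lift j to ℕ using hj
      exact hinit j (by omega)
    | succ N ih =>
      intro j hj hjd
      rcases lt_or_eq_of_le (show j ≤ N + d by omega) with hlt | rfl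
      · exact ih j (by omega) hlt
      · exact up N ih
    | pred N ih =>
      intro j hj hjd
      rcases eq_or_lt_of_le hj with rfl | hlt
      · simpa using down _ ih
      · exact ih j (by omega) (by omega)
  funext n
  simpa using up (n - d) (window _)

section Field
variable {K : Type*} [Field K]

theorem hasEigenvector_geomSeq {ω : K} (hω : ω ≠ 0) :
    (seqShift K).HasEigenvector ω (geomSeq ω) := by
  refine ⟨Module.End.mem_eigenspace_iff.mpr (funext fun n => ?_), fun h => ?_⟩
  · simp [seqShift_apply, geomSeq, zpow_add₀ hω, mul_comm]
  · simpa [geomSeq] using congrFun h 0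

theorem aeval_seqShift_geomSeq (p : K[X]) {ω : K} (hω : ω ≠ 0) :
    aeval (seqShift K) p (geomSeq ω) = p.eval ω • geomSeq ω :=
  Module.End.aeval_apply_of_hasEigenvector (hasEigenvector_geomSeq hω)

theorem injective_restrict_ker_aeval_seqShift {p : K[X]} (h0 : p.coeff 0 ≠ 0) :
    Function.Injective (LinearMap.funLeft K K (fun i : Fin p.natDegree => (i : ℤ)) ∘ₗ
      (LinearMap.ker (aeval (seqShift K) p)).subtype) := by
  rw [← LinearMap.ker_eq_bot, LinearMap.ker_eq_bot']
  rintro ⟨W, hW⟩ hinit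
  exact Subtype.ext
    (eq_zero_of_aeval_seqShift_eq_zero_of_init h0 hW fun i hi => congrFun hinit ⟨i, hi⟩)

theorem ne_zero_of_mem_rootSet {p : K[X]} (h0 : p.coeff 0 ≠ 0) {ω : K}
    (hω : ω ∈ p.rootSet K) : ω ≠ 0 := by
  rintro rfl
  simp [coeff_zero_eq_aeval_zero, (mem_rootSet.mp hω).2] at h0

theorem ker_aeval_seqShift_eq_span {p : K[X]} (hsplit : p.Splits) (hsep : p.Separable)
    (h0 : p.coeff 0 ≠ 0) :
    LinearMap.ker (aeval (seqShift K) p) = Submodule.span K (geomSeq '' p.rootSet K) := by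
  have hind : LinearIndependent K (fun ω : p.rootSet K => geomSeq (ω : K)) :=
    Module.End.eigenvectors_linearIndependent' (seqShift K) _ Subtype.coe_injective _
      fun ω => hasEigenvector_geomSeq (ne_zero_of_mem_rootSet h0 ω.2)
  have hinj := injective_restrict_ker_aeval_seqShift h0
  have := Module.Finite.of_injective _ hinj
  symm
  refine Submodule.eq_of_le_of_finrank_le ?_ ?_
  · rw [Submodule.span_le]
    rintro _ ⟨ω, hω, rfl⟩
    have hroot : p.eval ω = 0 := by simpa using (mem_rootSet.mp hω).2
    simp [aeval_seqShift_geomSeq p (ne_zero_of_mem_rootSet h0 hω), hroot]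
  · calc Module.finrank K (LinearMap.ker (aeval (seqShift K) p))
        ≤ p.natDegree := by simpa using LinearMap.finrank_le_finrank_of_injective hinj
      _ = Fintype.card (p.rootSet K) :=
        (card_rootSet_eq_natDegree hsep (by simpa using hsplit)).symm
      _ = _ := by rw [Set.image_eq_range, finrank_span_eq_card hind]

end Field

section Bounded
variable {𝕜 : Type*} [NormedField 𝕜]

@[simp]
theorem mem_boundedSeqs {W : ℤ → 𝕜} : W ∈ boundedSeqs 𝕜 ↔ Memℓp W ∞ := Iff.rfl

theorem Memℓp.seqShift_pow {W : ℤ → 𝕜} (hW : Memℓp W ∞) (k : ℕ) :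
    Memℓp ((seqShift 𝕜 ^ k) W) ∞ := by
  refine memℓp_infty (hW.bddAbove.mono ?_)
  rintro _ ⟨n, rfl⟩
  exact ⟨n + k, by simp [seqShift_pow_apply]⟩

theorem Memℓp.aeval_seqShift {W : ℤ → 𝕜} (hW : Memℓp W ∞) (p : 𝕜[X]) :
    Memℓp (aeval (seqShift 𝕜) p W) ∞ := by
  rw [aeval_eq_sum_range, LinearMap.sum_apply]
  convert Memℓp.finsetSum (Finset.range (p.natDegree + 1))
    fun k _ => (hW.seqShift_pow k).const_smul (p.coeff k) using 1
  ext n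
  simp

theorem norm_eq_one_of_memℓp_geomSeq {ω : 𝕜} (hω : ω ≠ 0) (h : Memℓp (geomSeq ω) ∞) :
    ‖ω‖ = 1 := by
  obtain ⟨C, hC⟩ := h.bddAbove
  have le_one (r : ℝ) (hr : ∀ N : ℕ, r ^ N ≤ C) : r ≤ 1 := by
    by_contra! h1
    obtain ⟨N, hN⟩ := pow_unbounded_of_one_lt C h1
    exact hN.not_ge (hr N)
  have h1 : ‖ω‖ ≤ 1 := le_one _ fun N => by simpa [geomSeq] using hC ⟨N, rfl⟩
  have h2 : ‖ω‖⁻¹ ≤ 1 := le_one _ fun N => by simpa [geomSeq] using hC ⟨-N, rfl⟩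
  exact le_antisymm h1 ((inv_le_one₀ (norm_pos_iff.mpr hω)).mp h2)

theorem norm_eq_one_of_memℓp_sum_smul_geomSeq {ι : Type*} [Fintype ι] {ω : ι → 𝕜}
    (hinj : Function.Injective ω) (hω : ∀ i, ω i ≠ 0) {c : ι → 𝕜}
    (h : Memℓp (∑ i, c i • geomSeq (ω i)) ∞) {j : ι} (hc : c j ≠ 0) : ‖ω j‖ = 1 := by
  classical
  set q : 𝕜[X] := ∏ i ∈ Finset.univ.erase j, (X - C (ω i))
  have hq_eq_zero (i : ι) : q.eval (ω i) = 0 ↔ i ≠ j := by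
    simp [q, eval_prod, Finset.prod_eq_zero_iff, sub_eq_zero, hinj.eq_iff]
  have hq : aeval (seqShift 𝕜) q (∑ i, c i • geomSeq (ω i)) =
      (c j * q.eval (ω j)) • geomSeq (ω j) := by
    simp only [map_sum, map_smul, aeval_seqShift_geomSeq _ (hω _), smul_smul]
    exact Finset.sum_eq_single j (fun i _ hij => by simp [(hq_eq_zero i).mpr hij]) (by simp)
  have hcq : c j * q.eval (ω j) ≠ 0 := mul_ne_zero hc (by simpa using (hq_eq_zero j).not)
  have hgeom := (h.aeval_seqShift q).const_smul (c j * q.eval (ω j))⁻¹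
  rw [hq, smul_smul, inv_mul_cancel₀ hcq, one_smul] at hgeom
  exact norm_eq_one_of_memℓp_geomSeq (hω j) hgeom

theorem boundedSeqs_inf_ker_aeval_seqShift_eq_span {p : 𝕜[X]} (hsplit : p.Splits)
    (hsep : p.Separable) (h0 : p.coeff 0 ≠ 0) :
    boundedSeqs 𝕜 ⊓ LinearMap.ker (aeval (seqShift 𝕜) p) =
      Submodule.span 𝕜 (geomSeq '' {ω | p.IsRoot ω ∧ ‖ω‖ = 1}) := by
  apply le_antisymm
  · rintro W ⟨hb, hW⟩
    rw [SetLike.mem_coe, mem_boundedSeqs] at hb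
    rw [SetLike.mem_coe, ker_aeval_seqShift_eq_span hsplit hsep h0] at hW
    obtain ⟨c, rfl⟩ := (Fintype.mem_span_image_iff_exists_fun 𝕜).mp hW
    refine Submodule.sum_mem _ fun ω _ => ?_
    by_cases hc : c ω = 0
    · simp [hc]
    refine Submodule.smul_mem _ _ (Submodule.subset_span ⟨ω, ⟨?_, ?_⟩, rfl⟩)
    · simpa using (mem_rootSet.mp ω.2).2
    · exact norm_eq_one_of_memℓp_sum_smul_geomSeq Subtype.coe_injective
        (fun ν => ne_zero_of_mem_rootSet h0 ν.2) hb hc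
  · rw [Submodule.span_le]
    rintro _ ⟨ω, ⟨hroot, hnorm⟩, rfl⟩
    have hω : ω ≠ 0 := by rintro rfl; simp at hnorm
    refine ⟨mem_boundedSeqs.mpr (memℓp_infty ⟨1, ?_⟩), ?_⟩
    · rintro _ ⟨n, rfl⟩
      simp [geomSeq, hnorm]
    · simp [aeval_seqShift_geomSeq p hω, hroot.eq_zero]

theorem comp_mem_boundedSeqs_inf_ker {𝕜' : Type*} [NormedField 𝕜'] (p : ℤ[X]) (φ : 𝕜 →+ 𝕜')
    (hφ : ∀ z, ‖φ z‖ ≤ ‖z‖) {W : ℤ → 𝕜}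
    (hW : W ∈ boundedSeqs 𝕜 ⊓ LinearMap.ker (aeval (seqShift 𝕜) p)) :
    φ ∘ W ∈ boundedSeqs 𝕜' ⊓ LinearMap.ker (aeval (seqShift 𝕜') p) := by
  obtain ⟨hb, hker⟩ := hW
  refine ⟨mem_boundedSeqs.mpr ((mem_boundedSeqs.mp hb).mono' fun n => hφ (W n)), ?_⟩
  simp only [SetLike.mem_coe, LinearMap.mem_ker] at hker ⊢
  rw [aeval_seqShift_comp, hker]
  ext
  simp

end Bounded

theorem mem_boundedSeqs_iff_exists_abs_le {w : ℤ → ℝ} :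
    w ∈ boundedSeqs ℝ ↔ ∃ C, ∀ n, |w n| ≤ C := by
  simp [memℓp_infty_iff, bddAbove_def, Real.norm_eq_abs]

theorem Irreducible.separable_map_int {K : Type*} [Field K] [CharZero K] {f : ℤ[X]}
    (hf : Irreducible f) : (f.map (algebraMap ℤ K)).Separable := by
  by_cases hdeg : f.natDegree = 0
  · have hC : f = C (f.coeff 0) := eq_C_of_natDegree_eq_zero hdeg
    have h0 : f.coeff 0 ≠ 0 := fun h => hf.ne_zero (by rw [hC, h, C_0])
    rw [hC, Polynomial.map_C, separable_C, isUnit_iff_ne_zero]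
    simpa using h0
  · have hQ : Irreducible (f.map (Int.castRingHom ℚ)) :=
      (IsPrimitive.Int.irreducible_iff_irreducible_map_cast (hf.isPrimitive hdeg)).mp hf
    have h := hQ.separable.map (f := algebraMap ℚ K)
    rwa [Polynomial.map_map, Subsingleton.elim ((algebraMap ℚ K).comp _) (algebraMap ℤ K)] at h

theorem re_comp_mem_span {α : Type*} {S : Set (α → ℂ)} {W : α → ℂ}
    (hW : W ∈ Submodule.span ℂ S) :
    (fun n => (W n).re) ∈ Submodule.span ℝ
      {w | ∃ V ∈ S, w = (fun n => (V n).re) ∨ w = (fun n => (V n).im)} := by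
  set M := Submodule.span ℝ {w | ∃ V ∈ S, w = (fun n => (V n).re) ∨ w = (fun n => (V n).im)}
  suffices (fun n => (W n).re) ∈ M ∧ (fun n => (W n).im) ∈ M from this.1
  induction hW using Submodule.span_induction with
  | mem V hV =>
    exact ⟨Submodule.subset_span ⟨V, hV, Or.inl rfl⟩, Submodule.subset_span ⟨V, hV, Or.inr rfl⟩⟩
  | zero => exact ⟨M.zero_mem, M.zero_mem⟩
  | add V V' _ _ hV hV' => exact ⟨M.add_mem hV.1 hV'.1, M.add_mem hV.2 hV'.2⟩
  | smul c V _ hV =>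
    constructor
    · convert M.sub_mem (M.smul_mem c.re hV.1) (M.smul_mem c.im hV.2) using 1
      ext n
      simp
    · convert M.add_mem (M.smul_mem c.re hV.2) (M.smul_mem c.im hV.1) using 1
      ext n
      simp

theorem boundedSeqs_inf_ker_eq_span_re_im {f : ℤ[X]} (hconst : f.coeff 0 ≠ 0)
    (hirr : Irreducible f) :
    boundedSeqs ℝ ⊓ LinearMap.ker (aeval (seqShift ℝ) f) =
      Submodule.span ℝ {w : ℤ → ℝ | ∃ ω : ℂ, aeval ω f = 0 ∧ ‖ω‖ = 1 ∧
          (w = (fun n : ℤ => (ω ^ n).re) ∨ w = (fun n : ℤ => (ω ^ n).im))} := by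
  have hC := boundedSeqs_inf_ker_aeval_seqShift_eq_span
    (IsAlgClosed.splits (f.map (algebraMap ℤ ℂ))) hirr.separable_map_int (by simpa using hconst)
  simp only [aeval_map_algebraMap, IsRoot, eval_map_algebraMap] at hC
  apply le_antisymm
  · intro w hw
    have hW := comp_mem_boundedSeqs_inf_ker f Complex.ofRealHom.toAddMonoidHom (by simp) hw
    rw [hC] at hW
    refine Submodule.span_mono ?_ (re_comp_mem_span hW)
    rintro _ ⟨_, ⟨ω, ⟨hroot, hnorm⟩, rfl⟩, h⟩
    exact ⟨ω, hroot, hnorm, h⟩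
  · rw [Submodule.span_le]
    have hgeom {ω : ℂ} (hroot : aeval ω f = 0) (hnorm : ‖ω‖ = 1) :
        geomSeq ω ∈ boundedSeqs ℂ ⊓ LinearMap.ker (aeval (seqShift ℂ) f) :=
      hC ▸ Submodule.subset_span ⟨ω, ⟨hroot, hnorm⟩, rfl⟩
    rintro _ ⟨ω, hroot, hnorm, rfl | rfl⟩
    · exact comp_mem_boundedSeqs_inf_ker f Complex.reAddGroupHom Complex.abs_re_le_norm
        (hgeom hroot hnorm)
    · exact comp_mem_boundedSeqs_inf_ker f Complex.imAddGroupHom Complex.abs_im_le_norm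
        (hgeom hroot hnorm)

theorem kernel_of_fAct_eq_span_general
    (f : Polynomial ℤ) (hconst : f.coeff 0 ≠ 0) (hirr : Irreducible f) :
    ({w : ℤ → ℝ | (∃ C : ℝ, ∀ n : ℤ, |w n| ≤ C) ∧ fAct f w = 0}
      = ↑(Submodule.span ℝ {w : ℤ → ℝ | ∃ ω : ℂ, Polynomial.aeval ω f = 0 ∧
          ‖ω‖ = 1 ∧
          (w = (fun n : ℤ => (ω ^ n).re) ∨ w = (fun n : ℤ => (ω ^ n).im))})) ∧
    (Set.InjOn (fAct f) {w : ℤ → ℝ | ∃ C : ℝ, ∀ n : ℤ, |w n| ≤ C} ↔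
      ¬ ∃ ω : ℂ, Polynomial.aeval ω f = 0 ∧ ‖ω‖ = 1) := by
  have hbdd : {w : ℤ → ℝ | ∃ C : ℝ, ∀ n : ℤ, |w n| ≤ C} = boundedSeqs ℝ :=
    Set.ext fun _ => mem_boundedSeqs_iff_exists_abs_le.symm
  have hker := boundedSeqs_inf_ker_eq_span_re_im hconst hirr
  refine ⟨?_, ?_⟩
  · rw [← hker]
    ext w
    simp [← mem_boundedSeqs_iff_exists_abs_le, fAct_eq_aeval]
  · rw [hbdd, fAct_eq_aeval, ← LinearMap.disjoint_ker_iff_injOn, disjoint_iff, hker,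
      Submodule.span_eq_bot]
    constructor
    · rintro h ⟨ω, hroot, hnorm⟩
      simpa using congrFun (h _ ⟨ω, hroot, hnorm, Or.inl rfl⟩) 0
    · rintro h _ ⟨ω, hroot, hnorm, -⟩
      exact (h ⟨ω, hroot, hnorm⟩).elim

/-- The kernel of `f(σ̄)` acting on `ℓ^∞(ℤ,ℝ)` equals the real linear span of the
sequences `(Re(ω^n))ₙ` and `(Im(ω^n))ₙ`, with `ω` ranging over the roots of `f` of absolute
value 1.  In particular, `f(σ̄)` is injective on `ℓ^∞(ℤ,ℝ)` iff `f` has no root of absolute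
value 1. -/
theorem kernel_of_fAct_eq_span
    (f : Polynomial ℤ) (m : ℕ) (hm : 0 < m) (hdeg : f.natDegree = m)
    (hlead : 0 < f.leadingCoeff) (hconst : f.coeff 0 ≠ 0) (hirr : Irreducible f) :
    ({w : ℤ → ℝ | (∃ C : ℝ, ∀ n : ℤ, |w n| ≤ C) ∧ fAct f w = 0}
      = ↑(Submodule.span ℝ {w : ℤ → ℝ | ∃ ω : ℂ, Polynomial.aeval ω f = 0 ∧
          ‖ω‖ = 1 ∧
          (w = (fun n : ℤ => (ω ^ n).re) ∨ w = (fun n : ℤ => (ω ^ n).im))})) ∧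
    (Set.InjOn (fAct f) {w : ℤ → ℝ | ∃ C : ℝ, ∀ n : ℤ, |w n| ≤ C} ↔
      ¬ ∃ ω : ℂ, Polynomial.aeval ω f = 0 ∧ ‖ω‖ = 1) :=
  kernel_of_fAct_eq_span_general f hconst hirr
end

section
/- Let β > 1 and let V_β be the two-sided beta-shift space with shift σ̄. Then the homoclinic equivalence class of the zero sequence 𝟎 ∈ V_β is dense in V_β; in particular the homoclinic equivalence relation of σ̄ on V_β is topologically transitive. (Here two points of V_β are homoclinic if and only if they agree in all but finitely many coordinates.) -/
open Filter Topology

/-- The beta-transformation `T_β x = βx (mod 1)`. -/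
noncomputable def Tbeta (β : ℝ) : ℝ → ℝ := fun x => Int.fract (β * x)

/-- The beta-expansion of `x ∈ [0,1)`: the digit of index `n+1` is
`e_β(x)_{n+1} = β T_β^n x − T_β^{n+1} x = ⌊β T_β^n x⌋`. -/
noncomputable def ebeta (β : ℝ) (x : ℝ) : ℕ → ℤ := fun n => ⌊β * (Tbeta β)^[n] x⌋

/-- The one-sided beta-shift space. -/
def VbetaPlus (β : ℝ) : Set (ℕ → ℤ) :=
  closure {e | ∃ x : ℝ, 0 ≤ x ∧ x < 1 ∧ e = ebeta β x}

/-- The two-sided beta-shift space. -/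
def Vbeta (β : ℝ) : Set (ℤ → ℤ) :=
  {v | ∀ n : ℤ, (fun k : ℕ => v (n + (k : ℤ) + 1)) ∈ VbetaPlus β}

/-! A point `v` of `V_β` is approximated on `[-N, N]` by a finitely supported point of `V_β`:
take a β-expansion `e_β(x)` agreeing with `v` on the `2N+1` coordinates from `-N` on, truncate
it after them, and pad it with zeros on the left. The truncation is again a β-expansion `e_β(y)`,
built digit by digit since `(d + y) / β` has expansion `d` followed by `e_β(y)`. Every window of
the padded sequence is either a shift of `e_β(y)`, the expansion of `T_β^j y`, or `e_β(y)`
preceded by `p` zeros, the expansion of `y / β^p`. -/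

open Set

section Expansion

variable {β : ℝ}

lemma Tbeta_mem_Ico (β x : ℝ) : Tbeta β x ∈ Ico 0 1 :=
  ⟨Int.fract_nonneg _, Int.fract_lt_one _⟩

lemma iterate_Tbeta_mem_Ico {x : ℝ} (hx : x ∈ Ico 0 1) : ∀ n, (Tbeta β)^[n] x ∈ Ico 0 1
  | 0 => hx
  | n + 1 => by rw [Function.iterate_succ_apply']; exact Tbeta_mem_Ico β _

lemma ebeta_zero_apply (β x : ℝ) : ebeta β x 0 = ⌊β * x⌋ := rfl

lemma ebeta_add (β x : ℝ) (k j : ℕ) :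
    ebeta β x (k + j) = ebeta β ((Tbeta β)^[j] x) k := by
  simp only [ebeta, Function.iterate_add_apply]

lemma ebeta_succ (β x : ℝ) (k : ℕ) : ebeta β x (k + 1) = ebeta β (Tbeta β x) k :=
  ebeta_add β x k 1

lemma ebeta_zero (β : ℝ) : ebeta β 0 = 0 := by
  have hfix : ∀ n, (Tbeta β)^[n] 0 = 0 :=
    fun n => Function.iterate_fixed (by simp [Tbeta]) n
  funext n
  simp [ebeta, hfix]

lemma Tbeta_intCast_add_div (hβ : 0 < β) (d : ℤ) {y : ℝ} (hy : y ∈ Ico 0 1) :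
    Tbeta β ((d + y) / β) = y := by
  rw [Tbeta, mul_div_cancel₀ _ hβ.ne', Int.fract_intCast_add, Int.fract_eq_self.2 hy]

lemma ebeta_intCast_add_div_zero (hβ : 0 < β) (d : ℤ) {y : ℝ} (hy : y ∈ Ico 0 1) :
    ebeta β ((d + y) / β) 0 = d := by
  rw [ebeta_zero_apply, mul_div_cancel₀ _ hβ.ne', Int.floor_intCast_add,
    Int.floor_eq_zero_iff.2 hy, add_zero]

lemma ebeta_intCast_add_div_succ (hβ : 0 < β) (d : ℤ) {y : ℝ} (hy : y ∈ Ico 0 1) (k : ℕ) :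
    ebeta β ((d + y) / β) (k + 1) = ebeta β y k := by
  rw [ebeta_succ, Tbeta_intCast_add_div hβ d hy]

lemma div_pow_mem_Ico (hβ : 1 ≤ β) {x : ℝ} (hx : x ∈ Ico 0 1) (p : ℕ) :
    x / β ^ p ∈ Ico 0 1 := by
  have hpow : 1 ≤ β ^ p := one_le_pow₀ hβ
  exact ⟨div_nonneg hx.1 (by positivity),
    (div_le_self hx.1 hpow).trans_lt hx.2⟩

lemma ebeta_div_pow (hβ : 1 ≤ β) {x : ℝ} (hx : x ∈ Ico 0 1) (p : ℕ) :
    ebeta β (x / β ^ p) = fun k => if k < p then 0 else ebeta β x (k - p) := by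
  induction p with
  | zero => simp
  | succ p ih =>
    have hcons : x / β ^ (p + 1) = (((0 : ℤ) : ℝ) + x / β ^ p) / β := by
      rw [Int.cast_zero, zero_add, div_div, pow_succ]
    have hβ0 : 0 < β := by linarith
    have hmem := div_pow_mem_Ico hβ hx p
    funext k
    rw [hcons]
    rcases k with _ | k
    · rw [ebeta_intCast_add_div_zero hβ0 0 hmem, if_pos p.succ_pos]
    · rw [ebeta_intCast_add_div_succ hβ0 0 hmem, ih]
      simp only [Nat.add_lt_add_iff_right, Nat.add_sub_add_right]

lemma exists_ebeta_eq_truncation (hβ : 0 < β) (m : ℕ) :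
    ∀ {x : ℝ}, x ∈ Ico 0 1 → ∃ y ∈ Icc 0 x,
      ebeta β y = fun k => if k < m then ebeta β x k else 0 := by
  induction m with
  | zero => exact fun hx => ⟨0, ⟨le_rfl, hx.1⟩, by simp [ebeta_zero]; rfl⟩
  | succ m ih =>
    intro x hx
    obtain ⟨y, ⟨hy0, hyx⟩, hy⟩ := ih (Tbeta_mem_Ico β x)
    have hyI : y ∈ Ico 0 1 := ⟨hy0, hyx.trans_lt (Tbeta_mem_Ico β x).2⟩
    set d := ⌊β * x⌋
    have hd : 0 ≤ d := Int.floor_nonneg.2 (mul_nonneg hβ.le hx.1)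
    have hβx : β * x = d + Tbeta β x := (Int.floor_add_fract _).symm
    refine ⟨(d + y) / β, ⟨by positivity, ?_⟩, ?_⟩
    · rw [div_le_iff₀ hβ, mul_comm x, hβx]
      linarith
    funext k
    rcases k with _ | k
    · simp [ebeta_intCast_add_div_zero hβ d hyI, d, ebeta_zero_apply]
    · rw [ebeta_intCast_add_div_succ hβ d hyI, hy, ebeta_succ]
      simp only [Nat.add_lt_add_iff_right]

end Expansion

def leftPadZero (m : ℤ) (e : ℕ → ℤ) : ℤ → ℤ := fun i => if m ≤ i then e (i - m).toNat else 0

lemma leftPadZero_window_eq_shift {m n : ℤ} (h : m ≤ n + 1) (e : ℕ → ℤ) :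
    (fun k : ℕ => leftPadZero m e (n + k + 1)) = fun k => e (k + (n + 1 - m).toNat) := by
  funext k
  rw [leftPadZero, if_pos (by omega)]
  congr 1
  omega

lemma leftPadZero_window_eq_pad {m n : ℤ} (h : n + 1 < m) (e : ℕ → ℤ) :
    (fun k : ℕ => leftPadZero m e (n + k + 1)) =
      fun k => if k < (m - n - 1).toNat then 0 else e (k - (m - n - 1).toNat) := by
  funext k
  unfold leftPadZero
  split_ifs <;> first | omega | rfl | congr 1; omega

lemma leftPadZero_window_mem {S : Set (ℕ → ℤ)}
    (hshift : ∀ e ∈ S, ∀ j, (fun k => e (k + j)) ∈ S)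
    (hpad : ∀ e ∈ S, ∀ p, (fun k => if k < p then 0 else e (k - p)) ∈ S)
    {e : ℕ → ℤ} (he : e ∈ S) (m n : ℤ) :
    (fun k : ℕ => leftPadZero m e (n + k + 1)) ∈ S := by
  rcases le_or_gt m (n + 1) with h | h
  · rw [leftPadZero_window_eq_shift h]
    exact hshift e he _
  · rw [leftPadZero_window_eq_pad h]
    exact hpad e he _

lemma leftPadZero_support_subset {e : ℕ → ℤ} {M : ℕ} (he : ∀ k, M ≤ k → e k = 0) (m : ℤ) :
    {i | leftPadZero m e i ≠ 0} ⊆ Ico m (m + M) := by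
  intro i hi
  simp only [mem_ofPred_eq, leftPadZero] at hi
  split_ifs at hi with hmi
  · refine ⟨hmi, ?_⟩
    by_contra hge
    exact hi (he _ (by omega))
  · exact absurd rfl hi

lemma VbetaPlus_eq_closure_image (β : ℝ) : VbetaPlus β = closure (ebeta β '' Ico 0 1) := by
  simp only [VbetaPlus, image, mem_Ico, and_assoc, eq_comm]

lemma leftPadZero_mem_Vbeta {β : ℝ} (hβ : 1 ≤ β) {x : ℝ} (hx : x ∈ Ico 0 1) (m : ℤ) :
    leftPadZero m (ebeta β x) ∈ Vbeta β := by
  intro n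
  rw [VbetaPlus_eq_closure_image]
  refine subset_closure (leftPadZero_window_mem ?_ ?_ (mem_image_of_mem _ hx) m n)
  · rintro _ ⟨x, hx, rfl⟩ j
    exact ⟨_, iterate_Tbeta_mem_Ico hx j, funext fun k => (ebeta_add β x k j).symm⟩
  · rintro _ ⟨x, hx, rfl⟩ p
    exact ⟨_, div_pow_mem_Ico hβ hx p, ebeta_div_pow hβ hx p⟩

lemma exists_finite_support_eqOn_of_mem_Vbeta {β : ℝ} (hβ : 1 ≤ β) {v : ℤ → ℤ}
    (hv : v ∈ Vbeta β) (N : ℕ) :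
    ∃ w ∈ Vbeta β, {n : ℤ | w n ≠ 0}.Finite ∧ ∀ i : ℤ, |i| ≤ N → w i = v i := by
  have hwin := hv (-N - 1)
  rw [VbetaPlus_eq_closure_image] at hwin
  obtain ⟨_, hxv, ⟨x, hx, rfl⟩⟩ :=
    mem_closure_iff.1 hwin _ (PiNat.isOpen_cylinder _ _ (2 * N + 1)) (PiNat.self_mem_cylinder _ _)
  obtain ⟨y, ⟨hy0, hyx⟩, hy⟩ := exists_ebeta_eq_truncation (by linarith) (2 * N + 1) hx
  refine ⟨leftPadZero (-N) (ebeta β y), leftPadZero_mem_Vbeta hβ ⟨hy0, hyx.trans_lt hx.2⟩ _,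
    ?_, fun i hi => ?_⟩
  · refine (finite_Ico _ _).subset (leftPadZero_support_subset (M := 2 * N + 1) (fun k hk => ?_) _)
    rw [congrFun hy, if_neg (by omega)]
  · rw [abs_le] at hi
    have hk : (i - -N).toNat < 2 * N + 1 := by omega
    rw [leftPadZero, if_pos hi.1, congrFun hy, if_pos hk, PiNat.mem_cylinder_iff.1 hxv _ hk]
    congr 1
    omega

lemma mem_closure_of_forall_exists_eqOn {X : Type*} [TopologicalSpace X] {A : Set (ℤ → X)}
    {v : ℤ → X} (h : ∀ N : ℕ, ∃ w ∈ A, ∀ i : ℤ, |i| ≤ N → w i = v i) : v ∈ closure A := by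
  choose w hwA hwv using h
  refine mem_closure_of_tendsto (b := atTop) (tendsto_pi_nhds.2 fun i => ?_)
    (Eventually.of_forall hwA)
  refine tendsto_const_nhds.congr' ?_
  filter_upwards [eventually_ge_atTop i.natAbs] with N hN
  exact (hwv N i (by rw [Int.abs_eq_natAbs]; exact_mod_cast hN)).symm

/-- the homoclinic equivalence class of the zero sequence (i.e., the set of
points of `V_β` which agree with `0` in all but finitely many coordinates) is dense in `V_β`;
in particular the homoclinic relation of the shift on `V_β` is topologically transitive. -/
theorem beta_shift_homoclinic_class_of_zero_dense
    (β : ℝ) (hβ : 1 < β) :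
    (0 : ℤ → ℤ) ∈ Vbeta β ∧
    Vbeta β ⊆ closure {w : ℤ → ℤ | w ∈ Vbeta β ∧ {n : ℤ | w n ≠ 0}.Finite} := by
  refine ⟨fun n => subset_closure ⟨0, le_rfl, zero_lt_one, (ebeta_zero β).symm⟩, fun v hv => ?_⟩
  refine mem_closure_of_forall_exists_eqOn fun N => ?_
  obtain ⟨w, hwV, hwfin, hwv⟩ := exists_finite_support_eqOn_of_mem_Vbeta hβ.le hv N
  exact ⟨w, ⟨hwV, hwfin⟩, hwv⟩
end

section
/- Let β be a Salem number with minimal polynomial f ∈ R₁, and let V_β be the two-sided beta-shift space. Then the set R = {(v, v') ∈ V_β × V_β : v − v' ∈ f(σ̄*)(ℓ*(ℤ,ℤ))} is a Borel subset of V_β × V_β (with the product topology) and is invariant under σ̄ × σ̄. -/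
open Filter Topology

/-- `ℓ*(ℤ,ℤ)`: integer sequences growing at most linearly. -/
def lStarZ : Set (ℤ → ℤ) :=
  {y | ∃ C : ℝ, ∀ n : ℤ, (|y n| : ℝ) ≤ C * (|(n : ℝ)| + 1)}

/-! `V_β` is closed, being cut out by closed conditions on every window of a sequence. Since
`f ≠ 0` and `f(0) ≠ 0`, the recurrence `f(σ̄*) y = d` determines `y` from `y 0, …, y (deg f - 1)`
both forwards and backwards, so the continuous map `f(σ̄*)` is injective on each of the countably
many fibres of `y ↦ (y 0, …, y (deg f - 1))`; by Lusin–Souslin it maps the Borel set `ℓ*(ℤ,ℤ)`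
onto a Borel set. Shift invariance holds because `σ̄` preserves `V_β` and `ℓ*(ℤ,ℤ)` and commutes
with `f(σ̄*)`. -/

open Polynomial

section PolyShift

variable {R : Type*}

/-- `polyShift f` is the operator `f(σ̄*)` on two-sided sequences. -/
def polyShift [Semiring R] (f : R[X]) (y : ℤ → R) : ℤ → R :=
  fun n => ∑ k ∈ Finset.range (f.natDegree + 1), f.coeff k * y (n + k)

lemma mem_image_polyShift_iff [Semiring R] (f : R[X]) (s : Set (ℤ → R)) (d : ℤ → R) :
    d ∈ polyShift f '' s ↔
      ∃ y ∈ s, ∀ n : ℤ, d n = ∑ k ∈ Finset.range (f.natDegree + 1), f.coeff k * y (n + k) := by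
  simp only [Set.mem_image, funext_iff, polyShift, eq_comm]

lemma polyShift_sub [Ring R] (f : R[X]) (y y' : ℤ → R) :
    polyShift f (y - y') = polyShift f y - polyShift f y' := by
  funext n
  simp only [polyShift, Pi.sub_apply, mul_sub, Finset.sum_sub_distrib]

lemma polyShift_shift [Semiring R] (f : R[X]) (y : ℤ → R) (j : ℤ) :
    polyShift f (fun n => y (n + j)) = fun n => polyShift f y (n + j) := by
  funext n
  simp only [polyShift, add_right_comm]

section Uniqueness

variable [Semiring R] [NoZeroDivisors R] {f : R[X]} {z : ℤ → R}

lemma eqOn_zero_Ico_extend_right (hf : f ≠ 0) (hz : polyShift f z = 0) {a : ℤ}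
    (hinit : Set.EqOn z 0 (Set.Ico a (a + f.natDegree))) (m : ℕ) :
    Set.EqOn z 0 (Set.Ico a (a + f.natDegree + m)) := by
  induction m with
  | zero => simpa using hinit
  | succ m ih =>
    intro i hi
    rcases lt_or_ge i (a + f.natDegree + m) with hlt | _
    · exact ih ⟨hi.1, hlt⟩
    obtain rfl : i = a + f.natDegree + m := by
      simp only [Set.mem_Ico] at hi; push_cast at hi; omega
    have h := congrFun hz (a + m)
    rw [polyShift, Finset.sum_eq_single_of_mem f.natDegree (by simp) fun k hk _ =>
      by rw [ih ⟨by omega, by simp at hk; omega⟩, Pi.zero_apply, mul_zero]] at h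
    rw [Pi.zero_apply, mul_eq_zero, ← leadingCoeff, leadingCoeff_eq_zero] at h
    rw [Pi.zero_apply, add_right_comm]
    exact h.resolve_left hf

lemma eqOn_zero_Ico_extend_left (hf : f.coeff 0 ≠ 0) (hz : polyShift f z = 0) {a : ℤ}
    (hinit : Set.EqOn z 0 (Set.Ico a (a + f.natDegree))) (m : ℕ) :
    Set.EqOn z 0 (Set.Ico (a - m) (a + f.natDegree)) := by
  induction m with
  | zero => simpa using hinit
  | succ m ih =>
    intro i hi
    rcases eq_or_lt_of_le (show a - (m + 1 : ℕ) ≤ i from hi.1) with rfl | hlt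
    · have h := congrFun hz (a - (m + 1 : ℕ))
      rw [polyShift, Finset.sum_eq_single_of_mem 0 (by simp) fun k hk _ =>
        by rw [ih ⟨by omega, by simp at hk; omega⟩, Pi.zero_apply, mul_zero]] at h
      simpa [hf] using h
    · exact ih ⟨by omega, hi.2⟩

lemma eq_zero_of_polyShift_eq_zero (hf : f.coeff 0 ≠ 0) (hz : polyShift f z = 0)
    (hinit : ∀ i : Fin f.natDegree, z i = 0) : z = 0 := by
  have hf0 : f ≠ 0 := fun h => hf (by simp [h])
  have h0 : Set.EqOn z 0 (Set.Ico 0 (0 + f.natDegree)) := fun i hi => by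
    lift i to ℕ using hi.1
    exact hinit ⟨i, by simpa using hi.2⟩
  funext n
  rcases le_or_gt 0 n with hn | hn
  · exact eqOn_zero_Ico_extend_right hf0 hz h0 (n.natAbs + 1) ⟨hn, by omega⟩
  · exact eqOn_zero_Ico_extend_left hf hz h0 n.natAbs ⟨by omega, by omega⟩

end Uniqueness

lemma polyShift_injOn [Ring R] [NoZeroDivisors R] {f : R[X]} (hf : f.coeff 0 ≠ 0)
    (a : Fin f.natDegree → R) :
    Set.InjOn (polyShift f) {y | ∀ i : Fin f.natDegree, y i = a i} := by
  intro y hy y' hy' h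
  rw [← sub_eq_zero]
  refine eq_zero_of_polyShift_eq_zero hf (by rw [polyShift_sub, h, sub_self]) fun i => ?_
  simp [hy i, hy' i]

lemma continuous_polyShift [Semiring R] [TopologicalSpace R] [IsTopologicalSemiring R]
    (f : R[X]) : Continuous (polyShift f) :=
  continuous_pi fun _ => continuous_finsetSum _ fun _ _ =>
    continuous_const.mul (continuous_apply _)

end PolyShift

lemma measurableSet_lStarZ : MeasurableSet lStarZ := by
  have h : lStarZ = ⋃ C : ℕ, ⋂ n : ℤ, {y : ℤ → ℤ | (|y n| : ℝ) ≤ C * (|(n : ℝ)| + 1)} := by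
    ext y
    simp only [lStarZ, Set.mem_ofPred_eq, Set.mem_iUnion, Set.mem_iInter]
    refine ⟨fun ⟨C, hC⟩ => ⟨⌈C⌉₊, fun n => (hC n).trans ?_⟩, fun ⟨C, hC⟩ => ⟨C, hC⟩⟩
    gcongr
    exact Nat.le_ceil C
  rw [h]
  exact .iUnion fun C => .iInter fun n =>
    (MeasurableSet.of_discrete (s := {z : ℤ | (|z| : ℝ) ≤ C * (|(n : ℝ)| + 1)})).preimage
      (measurable_pi_apply n)

lemma MeasurableSet.image_polyShift {f : ℤ[X]} (hf : f.coeff 0 ≠ 0) {s : Set (ℤ → ℤ)}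
    (hs : MeasurableSet s) : MeasurableSet (polyShift f '' s) := by
  have hfib : s = ⋃ a : Fin f.natDegree → ℤ, s ∩ {y | ∀ i : Fin f.natDegree, y i = a i} := by
    ext y
    simp only [Set.mem_iUnion, Set.mem_inter_iff, Set.mem_ofPred_eq]
    exact ⟨fun hy => ⟨fun i => y i, hy, fun _ => rfl⟩, fun ⟨_, hy, _⟩ => hy⟩
  rw [hfib, Set.image_iUnion]
  refine .iUnion fun a => (hs.inter ?_).image_of_continuousOn_injOn
    (continuous_polyShift f).continuousOn ((polyShift_injOn hf a).mono Set.inter_subset_right)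
  simp only [Set.ofPred_forall]
  exact .iInter fun i => measurableSet_eq_fun (measurable_pi_apply _) measurable_const

lemma isClosed_Vbeta (β : ℝ) : IsClosed (Vbeta β) := by
  have h : Vbeta β = ⋂ n : ℤ, (fun v : ℤ → ℤ => fun k : ℕ => v (n + k + 1)) ⁻¹' VbetaPlus β := by
    ext v
    simp only [Vbeta, Set.mem_ofPred_eq, Set.mem_iInter, Set.mem_preimage]
  rw [h]
  exact isClosed_iInter fun n =>
    isClosed_closure.preimage (continuous_pi fun _ => continuous_apply _)

lemma shift_mem_iff {α : Type*} {S : Set (ℤ → α)}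
    (hS : ∀ j : ℤ, ∀ v ∈ S, (fun n => v (n + j)) ∈ S) (v : ℤ → α) (j : ℤ) :
    (fun n => v (n + j)) ∈ S ↔ v ∈ S :=
  ⟨fun h => by simpa using hS (-j) _ h, hS j v⟩

lemma shift_mem_Vbeta (β : ℝ) (j : ℤ) (v : ℤ → ℤ) (hv : v ∈ Vbeta β) :
    (fun n => v (n + j)) ∈ Vbeta β := by
  intro n
  simpa only [add_right_comm _ j] using hv (n + j)

lemma shift_mem_lStarZ (j : ℤ) (y : ℤ → ℤ) (hy : y ∈ lStarZ) : (fun n => y (n + j)) ∈ lStarZ := by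
  obtain ⟨C, hC⟩ := hy
  refine ⟨|C| * (|(j : ℝ)| + 1), fun n => ?_⟩
  have hnj : |((n + j : ℤ) : ℝ)| + 1 ≤ (|(j : ℝ)| + 1) * (|(n : ℝ)| + 1) := by
    push_cast
    nlinarith [abs_add_le (n : ℝ) j, abs_nonneg (n : ℝ), abs_nonneg (j : ℝ)]
  calc (|y (n + j)| : ℝ) ≤ C * (|((n + j : ℤ) : ℝ)| + 1) := hC (n + j)
    _ ≤ |C| * ((|(j : ℝ)| + 1) * (|(n : ℝ)| + 1)) := by gcongr; exact le_abs_self C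
    _ = |C| * (|(j : ℝ)| + 1) * (|(n : ℝ)| + 1) := by ring

lemma shift_mem_image_polyShift_lStarZ (f : ℤ[X]) (j : ℤ) (d : ℤ → ℤ)
    (hd : d ∈ polyShift f '' lStarZ) : (fun n => d (n + j)) ∈ polyShift f '' lStarZ := by
  obtain ⟨y, hy, rfl⟩ := hd
  exact ⟨_, shift_mem_lStarZ j y hy, polyShift_shift f y j⟩

theorem salem_equivalence_relation_borel_invariant_general
    (β : ℝ)
    (f : Polynomial ℤ) (hconst : f.coeff 0 = 1) :
    MeasurableSet {p : (ℤ → ℤ) × (ℤ → ℤ) | p.1 ∈ Vbeta β ∧ p.2 ∈ Vbeta β ∧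
      ∃ y ∈ lStarZ, ∀ n : ℤ, p.1 n - p.2 n = ∑ k ∈ Finset.range (f.natDegree + 1),
        f.coeff k * y (n + (k : ℤ))} ∧
    (∀ v v' : ℤ → ℤ,
      ((v, v') ∈ {p : (ℤ → ℤ) × (ℤ → ℤ) | p.1 ∈ Vbeta β ∧ p.2 ∈ Vbeta β ∧
        ∃ y ∈ lStarZ, ∀ n : ℤ, p.1 n - p.2 n = ∑ k ∈ Finset.range (f.natDegree + 1),
          f.coeff k * y (n + (k : ℤ))} ↔
      ((fun n => v (n + 1)), (fun n => v' (n + 1))) ∈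
        {p : (ℤ → ℤ) × (ℤ → ℤ) | p.1 ∈ Vbeta β ∧ p.2 ∈ Vbeta β ∧
        ∃ y ∈ lStarZ, ∀ n : ℤ, p.1 n - p.2 n = ∑ k ∈ Finset.range (f.natDegree + 1),
          f.coeff k * y (n + (k : ℤ))})) := by
  have hR : {p : (ℤ → ℤ) × (ℤ → ℤ) | p.1 ∈ Vbeta β ∧ p.2 ∈ Vbeta β ∧
      ∃ y ∈ lStarZ, ∀ n : ℤ, p.1 n - p.2 n = ∑ k ∈ Finset.range (f.natDegree + 1),
        f.coeff k * y (n + (k : ℤ))} =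
      {p | p.1 ∈ Vbeta β ∧ p.2 ∈ Vbeta β ∧ p.1 - p.2 ∈ polyShift f '' lStarZ} := by
    simp only [mem_image_polyShift_iff, Pi.sub_apply]
  rw [hR]
  have hV := (isClosed_Vbeta β).measurableSet
  have hD := measurableSet_lStarZ.image_polyShift (f := f) (by simp [hconst])
  refine ⟨(hV.preimage measurable_fst).inter ((hV.preimage measurable_snd).inter
    (hD.preimage (measurable_fst.sub measurable_snd))), fun v v' => ?_⟩
  exact and_congr (shift_mem_iff (shift_mem_Vbeta β) v 1).symm
    (and_congr (shift_mem_iff (shift_mem_Vbeta β) v' 1).symm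
      (shift_mem_iff (shift_mem_image_polyShift_lStarZ f) (v - v') 1).symm)

/-- for a Salem number `β` with minimal polynomial `f`, the relation
`R = {(v,v') ∈ V_β × V_β : v − v' ∈ f(σ̄*)(ℓ*(ℤ,ℤ))}` is a Borel subset of `V_β × V_β`
invariant under `σ̄ × σ̄`. -/
theorem salem_equivalence_relation_borel_invariant
    (β : ℝ) (hβ : 1 < β)
    (f : Polynomial ℤ) (hirr : Irreducible f) (hmonic : f.Monic) (hconst : f.coeff 0 = 1)
    (hroot : Polynomial.aeval β f = 0)
    (hconj : ∀ z : ℂ, Polynomial.aeval z f = 0 → z = (β : ℂ) ∨ ‖z‖ ≤ 1)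
    (hsalem : ∃ z : ℂ, Polynomial.aeval z f = 0 ∧ ‖z‖ = 1) :
    MeasurableSet {p : (ℤ → ℤ) × (ℤ → ℤ) | p.1 ∈ Vbeta β ∧ p.2 ∈ Vbeta β ∧
      ∃ y ∈ lStarZ, ∀ n : ℤ, p.1 n - p.2 n = ∑ k ∈ Finset.range (f.natDegree + 1),
        f.coeff k * y (n + (k : ℤ))} ∧
    (∀ v v' : ℤ → ℤ,
      ((v, v') ∈ {p : (ℤ → ℤ) × (ℤ → ℤ) | p.1 ∈ Vbeta β ∧ p.2 ∈ Vbeta β ∧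
        ∃ y ∈ lStarZ, ∀ n : ℤ, p.1 n - p.2 n = ∑ k ∈ Finset.range (f.natDegree + 1),
          f.coeff k * y (n + (k : ℤ))} ↔
      ((fun n => v (n + 1)), (fun n => v' (n + 1))) ∈
        {p : (ℤ → ℤ) × (ℤ → ℤ) | p.1 ∈ Vbeta β ∧ p.2 ∈ Vbeta β ∧
        ∃ y ∈ lStarZ, ∀ n : ℤ, p.1 n - p.2 n = ∑ k ∈ Finset.range (f.natDegree + 1),
          f.coeff k * y (n + (k : ℤ))})) :=
  salem_equivalence_relation_borel_invariant_general β f hconst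
end
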